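/- Let b ≥ 2 and let D be a finite set of nonnegative integers. Suppose B is a P_D-blocking of the Protasov tree of b of minimal cardinality, i.e., every P_D-blocking B' satisfies #B' ≥ #B. Then B is symmetric: whenever (k,m) ∈ B and (k',m') is a vertex with τ(k',m') = τ(k,m), then (k',m') ∈ B. -/

import Mathlib

/-!
Whether `P_D` vanishes at `e^{2πi m / b^k}` depends only on the order `τ(k, m)` of this root of
unity, because the cyclotomic polynomial of that order divides `P_D` as soon as one primitive root
is a zero. The zeros of `P_D` none of whose proper ancestors is a zero form a `P_D`-blocking `M`,
and `M` is symmetric: `τ` determines the level of a vertex and the orders of all its ancestors.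
For any `P_D`-blocking `B`, the second coordinate embeds `M` into the second coordinates of `B`,
strictly unless `M ⊆ B`; so a `P_D`-blocking of minimal size contains, hence equals, `M`.
-/

open Polynomial

/-- The mask polynomial `P_A(X) = ∑_{a ∈ A} X^a ∈ ℤ[X]` of a finite set of naturals. -/
noncomputable def mask (A : Finset ℕ) : Polynomial ℤ := ∑ a ∈ A, X ^ a

/-- `(k, m)` is a vertex of the Protasov tree of `b`. -/
def IsVertex (b : ℕ) (v : ℕ × ℕ) : Prop :=
  1 ≤ v.1 ∧ 1 ≤ v.2 ∧ v.2 < b ^ v.1 ∧ ¬ b ∣ v.2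

/-- `τ(k, m) = b^k / gcd(m, b^k)`. -/
def tau (b : ℕ) (v : ℕ × ℕ) : ℕ := b ^ v.1 / Nat.gcd v.2 (b ^ v.1)

/-- An infinite path in the Protasov tree of `b` (indices `k ≥ 1`). -/
def IsPath (b : ℕ) (m : ℕ → ℕ) : Prop :=
  (1 ≤ m 1 ∧ m 1 ≤ b - 1) ∧
    ∀ k : ℕ, 1 ≤ k → 1 ≤ m (k + 1) ∧ m (k + 1) < b ^ (k + 1) ∧ m (k + 1) ≡ m k [MOD b ^ k]

/-- A blocking of the Protasov tree. -/
def IsBlocking (b : ℕ) (B : Set (ℕ × ℕ)) : Prop :=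
  B.Finite ∧ (∀ v ∈ B, IsVertex b v) ∧
    ∀ m : ℕ → ℕ, IsPath b m → ∃! k : ℕ, 1 ≤ k ∧ (k, m k) ∈ B

/-- A `P_D`-blocking: a blocking all of whose vertices are zeros of the mask polynomial. -/
def IsPDBlocking (b : ℕ) (D : Finset ℕ) (B : Set (ℕ × ℕ)) : Prop :=
  IsBlocking b B ∧ ∀ v ∈ B, Polynomial.aeval
    (Complex.exp (2 * Real.pi * Complex.I * (v.2 : ℂ) / (b : ℂ) ^ v.1)) (mask D) = 0

open Complex in
lemma isPrimitiveRoot_exp_div_gcd {n : ℕ} (hn : n ≠ 0) (m : ℕ) :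
    IsPrimitiveRoot (exp (2 * Real.pi * I * m / n)) (n / m.gcd n) := by
  have hg : 0 < m.gcd n := Nat.gcd_pos_of_pos_right m (Nat.pos_of_ne_zero hn)
  have hquot : ((m / m.gcd n : ℕ) : ℂ) / (n / m.gcd n : ℕ) = m / n := by
    rw [Nat.cast_div (Nat.gcd_dvd_left m n) (by exact_mod_cast hg.ne'),
      Nat.cast_div (Nat.gcd_dvd_right m n) (by exact_mod_cast hg.ne')]
    have : (m.gcd n : ℂ) ≠ 0 := by exact_mod_cast hg.ne'
    field_simp
  have := isPrimitiveRoot_exp_of_coprime (m / m.gcd n) (n / m.gcd n)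
    (Nat.div_ne_zero_iff_of_dvd (Nat.gcd_dvd_right m n) |>.mpr ⟨hn, hg.ne'⟩)
    (Nat.coprime_div_gcd_div_gcd hg)
  rwa [hquot, ← mul_div_assoc] at this

lemma IsPrimitiveRoot.aeval_eq_zero_of_aeval_eq_zero {K : Type*} [Field K] [CharZero K]
    {ζ ξ : K} {n : ℕ} (hn : 0 < n) (hζ : IsPrimitiveRoot ζ n) (hξ : IsPrimitiveRoot ξ n) {p : ℤ[X]}
    (hp : aeval ζ p = 0) : aeval ξ p = 0 := by
  have hdvd : cyclotomic n ℤ ∣ p := by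
    rw [cyclotomic_eq_minpoly hζ hn]
    exact minpoly.isIntegrallyClosed_dvd (hζ.isIntegral hn) hp
  refine aeval_eq_zero_of_dvd_aeval_eq_zero hdvd ?_
  rw [aeval_def, eval₂_eq_eval_map, map_cyclotomic]
  exact hξ.isRoot_cyclotomic hn

def IsMaskZero (b : ℕ) (D : Finset ℕ) (v : ℕ × ℕ) : Prop :=
  aeval (Complex.exp (2 * Real.pi * Complex.I * (v.2 : ℂ) / (b : ℂ) ^ v.1)) (mask D) = 0

section Tau

variable {b : ℕ}

lemma isPrimitiveRoot_tau (hb : 0 < b) (v : ℕ × ℕ) :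
    IsPrimitiveRoot (Complex.exp (2 * Real.pi * Complex.I * (v.2 : ℂ) / (b : ℂ) ^ v.1))
      (tau b v) := by
  simpa [tau] using isPrimitiveRoot_exp_div_gcd (pow_ne_zero v.1 hb.ne') v.2

lemma tau_pos (hb : 0 < b) (v : ℕ × ℕ) : 0 < tau b v :=
  Nat.div_pos (Nat.gcd_le_right _ (by positivity)) (Nat.gcd_pos_of_pos_right _ (by positivity))

lemma IsMaskZero.of_tau_eq (hb : 0 < b) {D : Finset ℕ} {v w : ℕ × ℕ}
    (hv : IsMaskZero b D v) (h : tau b w = tau b v) : IsMaskZero b D w :=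
  (isPrimitiveRoot_tau hb v).aeval_eq_zero_of_aeval_eq_zero (tau_pos hb v)
    (h ▸ isPrimitiveRoot_tau hb w) hv

lemma gcd_mul_tau (b : ℕ) (v : ℕ × ℕ) : v.2.gcd (b ^ v.1) * tau b v = b ^ v.1 :=
  Nat.mul_div_cancel' (Nat.gcd_dvd_right _ _)

lemma tau_mod_pow {m j k : ℕ} (h : j ≤ k) :
    tau b (j, m % b ^ j) = b ^ j / (m.gcd (b ^ k)).gcd (b ^ j) := by
  rw [tau, ← Nat.gcd_rec, Nat.gcd_comm, Nat.gcd_assoc, Nat.gcd_eq_right (pow_dvd_pow b h)]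

lemma IsVertex.base_pos {v : ℕ × ℕ} (hv : IsVertex b v) : 0 < b := by
  rcases Nat.eq_zero_or_pos b with rfl | hb
  · have := hv.2.2.1
    rw [zero_pow (by have := hv.1; omega)] at this
    omega
  · exact hb

/-- Since `b ∤ gcd(m, b^k)`, the power `b^k = gcd(m, b^k) · τ` determines `k` from `τ`. -/
lemma IsVertex.fst_eq_of_tau_eq {v w : ℕ × ℕ} (hv : IsVertex b v) (hw : IsVertex b w)
    (h : tau b w = tau b v) : w.1 = v.1 := by
  have hb := hv.base_pos
  wlog hle : v.1 ≤ w.1 generalizing v w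
  · exact (this hw hv h.symm (by omega)).symm
  by_contra hne
  have hmul : w.2.gcd (b ^ w.1) * tau b v = b ^ (w.1 - v.1) * v.2.gcd (b ^ v.1) * tau b v := by
    rw [mul_assoc, gcd_mul_tau, ← h, gcd_mul_tau, ← pow_add, Nat.sub_add_cancel hle]
  have hgcd := Nat.eq_of_mul_eq_mul_right (tau_pos hb v) hmul
  exact hw.2.2.2 <| (dvd_pow_self b (by omega)).mul_right _ |>.trans
    (hgcd ▸ Nat.gcd_dvd_left _ _)

lemma IsVertex.gcd_eq_of_tau_eq {v w : ℕ × ℕ} (hv : IsVertex b v) (hw : IsVertex b w)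
    (h : tau b w = tau b v) : w.2.gcd (b ^ w.1) = v.2.gcd (b ^ v.1) := by
  have hb := hv.base_pos
  refine Nat.eq_of_mul_eq_mul_right (tau_pos hb v) ?_
  rw [← h, gcd_mul_tau, h, gcd_mul_tau, hv.fst_eq_of_tau_eq hw h]

end Tau

section Tree

variable {b : ℕ}

lemma IsPath.lt_pow {m : ℕ → ℕ} (hm : IsPath b m) {k : ℕ} (hk : 1 ≤ k) : m k < b ^ k := by
  obtain ⟨k, rfl⟩ := Nat.exists_eq_add_of_le' hk
  rcases k.eq_zero_or_pos with rfl | hk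
  · have := hm.1
    simp only [zero_add, pow_one]
    omega
  · exact (hm.2 k hk).2.1

lemma IsPath.eq_mod_pow {m : ℕ → ℕ} (hm : IsPath b m) {j k : ℕ} (hj : 1 ≤ j) (hjk : j ≤ k) :
    m j = m k % b ^ j := by
  induction k, hjk using Nat.le_induction with
  | base => exact (Nat.mod_eq_of_lt (hm.lt_pow hj)).symm
  | succ k hjk ih => rw [ih, ((hm.2 k (hj.trans hjk)).2.2.of_dvd (pow_dvd_pow b hjk))]

lemma IsPath.isVertex {m : ℕ → ℕ} (hm : IsPath b m) {k : ℕ} (hk : 1 ≤ k) :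
    IsVertex b (k, m k) := by
  have h1 : m 1 = m k % b := by simpa using hm.eq_mod_pow le_rfl hk
  have := hm.1
  refine ⟨hk, ?_, hm.lt_pow hk, fun hdvd => ?_⟩
  · by_contra h0
    simp_all
  · rw [Nat.mod_eq_zero_of_dvd hdvd] at h1
    omega

lemma isPath_mod_pow (hb : 0 < b) {m : ℕ} (hm : ¬ b ∣ m) : IsPath b (fun j => m % b ^ j) := by
  have hpos : ∀ j, 1 ≤ j → 1 ≤ m % b ^ j := fun j hj =>
    Nat.pos_of_ne_zero fun h0 => hm ((dvd_pow_self b (by omega)).trans (Nat.dvd_of_mod_eq_zero h0))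
  refine ⟨⟨hpos 1 le_rfl, ?_⟩, fun k hk => ⟨hpos _ (by omega), Nat.mod_lt _ (by positivity), ?_⟩⟩
  · simpa using Nat.le_sub_one_of_lt (Nat.mod_lt m hb)
  · exact ((Nat.mod_modEq m _).of_dvd (pow_dvd_pow b k.le_succ)).trans (Nat.mod_modEq m _).symm

lemma IsVertex.snd_mod_pow_fst {v : ℕ × ℕ} (hv : IsVertex b v) : v.2 % b ^ v.1 = v.2 :=
  Nat.mod_eq_of_lt hv.2.2.1

lemma IsBlocking.existsUnique_mod_pow (hb : 0 < b) {B : Set (ℕ × ℕ)} (hB : IsBlocking b B)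
    {m : ℕ} (hm : ¬ b ∣ m) : ∃! i, 1 ≤ i ∧ (i, m % b ^ i) ∈ B :=
  hB.2.2 _ (isPath_mod_pow hb hm)

lemma IsBlocking.eq_of_subset (hb : 0 < b) {B B' : Set (ℕ × ℕ)} (hB : IsBlocking b B)
    (hB' : IsBlocking b B') (h : B ⊆ B') : B = B' := by
  refine h.antisymm fun u hu => ?_
  have hv := hB'.2.1 u hu
  obtain ⟨i, ⟨hi, hiB⟩, -⟩ := hB.existsUnique_mod_pow hb hv.2.2.2
  have hiu : i = u.1 :=
    (hB'.existsUnique_mod_pow hb hv.2.2.2).unique ⟨hi, h hiB⟩ ⟨hv.1, by rwa [hv.snd_mod_pow_fst]⟩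
  rwa [hiu, hv.snd_mod_pow_fst] at hiB

end Tree

/-- The ancestor of `(k, m)` at level `j ≤ k` is `(j, m % b ^ j)`. -/
def minimalMaskZeros (b : ℕ) (D : Finset ℕ) : Set (ℕ × ℕ) :=
  {u | IsVertex b u ∧ IsMaskZero b D u ∧ ∀ j, 1 ≤ j → j < u.1 → ¬ IsMaskZero b D (j, u.2 % b ^ j)}

namespace minimalMaskZeros

variable {b : ℕ} {D : Finset ℕ} {u : ℕ × ℕ}

lemma fst_le (hu : u ∈ minimalMaskZeros b D) {j : ℕ} (hj : 1 ≤ j)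
    (hzero : IsMaskZero b D (j, u.2 % b ^ j)) : u.1 ≤ j :=
  not_lt.mp fun hlt => hu.2.2 j hj hlt hzero

lemma injOn_snd : Set.InjOn Prod.snd (minimalMaskZeros b D) := by
  intro u hu w hw (h : u.2 = w.2)
  have hwu : w.1 ≤ u.1 := fst_le hw hu.1.1 (by rw [← h, hu.1.snd_mod_pow_fst]; exact hu.2.1)
  have huw : u.1 ≤ w.1 := fst_le hu hw.1.1 (by rw [h, hw.1.snd_mod_pow_fst]; exact hw.2.1)
  exact Prod.ext (by omega) h

/-- The ancestors of vertices with equal `τ` have equal `τ` level by level. -/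
lemma mem_of_tau_eq (hb : 0 < b) (hv : u ∈ minimalMaskZeros b D) {w : ℕ × ℕ}
    (hw : IsVertex b w) (h : tau b w = tau b u) : w ∈ minimalMaskZeros b D := by
  have hlevel := hv.1.fst_eq_of_tau_eq hw h
  refine ⟨hw, hv.2.1.of_tau_eq hb h, fun j hj hjw hzero => hv.2.2 j hj (hlevel ▸ hjw) ?_⟩
  refine hzero.of_tau_eq hb ?_
  rw [tau_mod_pow (hlevel ▸ hjw.le), tau_mod_pow hjw.le, hv.1.gcd_eq_of_tau_eq hw h]

lemma exists_mem_of_isPDBlocking (hb : 0 < b) {B : Set (ℕ × ℕ)} (hB : IsPDBlocking b D B)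
    (hu : u ∈ minimalMaskZeros b D) : ∃ i, u.1 ≤ i ∧ (i, u.2) ∈ B := by
  obtain ⟨i, ⟨hi, hiB⟩, -⟩ := hB.1.existsUnique_mod_pow hb hu.1.2.2.2
  have hui : u.1 ≤ i := fst_le hu hi (hB.2 _ hiB)
  refine ⟨i, hui, ?_⟩
  rwa [Nat.mod_eq_of_lt (hu.1.2.2.1.trans_le (Nat.pow_le_pow_right hb hui))] at hiB

lemma finite (hb : 0 < b) {B : Set (ℕ × ℕ)} (hB : IsPDBlocking b D B) :
    (minimalMaskZeros b D).Finite := by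
  obtain ⟨K, hK⟩ := (hB.1.1.image Prod.fst).bddAbove
  refine ((Set.finite_Iic K).prod (Set.finite_Iio (b ^ K))).subset fun u hu => ?_
  obtain ⟨i, hui, hiB⟩ := exists_mem_of_isPDBlocking hb hB hu
  have huK : u.1 ≤ K := hui.trans (hK ⟨_, hiB, rfl⟩)
  exact ⟨huK, hu.1.2.2.1.trans_le (Nat.pow_le_pow_right hb huK)⟩

/-- Every path meets `minimalMaskZeros` at its first zero of `P_D`. -/
lemma isPDBlocking (hb : 0 < b) {B : Set (ℕ × ℕ)} (hB : IsPDBlocking b D B) :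
    IsPDBlocking b D (minimalMaskZeros b D) := by
  classical
  refine ⟨⟨finite hb hB, fun u hu => hu.1, fun m hm => ?_⟩, fun u hu => hu.2.1⟩
  obtain ⟨i, ⟨hi, hiB⟩, -⟩ := hB.1.2.2 m hm
  have hex : ∃ j, 1 ≤ j ∧ IsMaskZero b D (j, m j) := ⟨i, hi, hB.2 _ hiB⟩
  obtain ⟨hk, hzero⟩ := Nat.find_spec hex
  refine ⟨Nat.find hex, ⟨hk, hm.isVertex hk, hzero, fun j hj hjk hzj => ?_⟩, ?_⟩
  · rw [← hm.eq_mod_pow hj hjk.le] at hzj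
    exact Nat.find_min hex hjk ⟨hj, hzj⟩
  · rintro k ⟨hk', hkM⟩
    have hle := Nat.find_min' hex ⟨hk', hkM.2.1⟩
    refine (le_antisymm hle (fst_le hkM hk ?_)).symm
    rwa [← hm.eq_mod_pow hk hle]

/-- If the path through `u = (k, m)` meets `B` strictly below `u`, then the path through the
sibling branch `m + b ^ k` meets `B` at a vertex whose second coordinate is `m + b ^ k`, and no
minimal zero has that coordinate, since its ancestor at level `k` would be the zero `u`. -/
lemma exists_mem_snd_notMem_image (hb : 2 ≤ b) {B : Set (ℕ × ℕ)} (hB : IsPDBlocking b D B)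
    (hu : u ∈ minimalMaskZeros b D) (huB : u ∉ B) :
    ∃ y ∈ B, y.2 ∉ Prod.snd '' minimalMaskZeros b D := by
  have hb0 : 0 < b := by omega
  obtain ⟨i, hle, hiB⟩ := exists_mem_of_isPDBlocking hb0 hB hu
  have hui : u.1 < i := lt_of_le_of_ne hle fun h => huB (by rwa [← h] at hiB)
  have hmod : ∀ j ≤ u.1, (u.2 + b ^ u.1) % b ^ j = u.2 % b ^ j := fun j hj => by
    obtain ⟨c, hc⟩ := pow_dvd_pow b hj
    rw [hc, Nat.add_mul_mod_self_left]
  have hlt : u.2 + b ^ u.1 < b ^ (u.1 + 1) := by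
    have := hu.1.2.2.1
    rw [pow_succ]
    nlinarith
  have hndvd : ¬ b ∣ u.2 + b ^ u.1 := by
    have h1 := hmod 1 hu.1.1
    rw [pow_one] at h1
    rw [Nat.dvd_iff_mod_eq_zero, h1, ← Nat.dvd_iff_mod_eq_zero]
    exact hu.1.2.2.2
  obtain ⟨i', ⟨hi', hi'B⟩, -⟩ := hB.1.existsUnique_mod_pow hb0 hndvd
  have hui' : u.1 < i' := by
    by_contra! hle
    rw [hmod i' hle] at hi'B
    have hiB' : (i, u.2 % b ^ i) ∈ B := by
      rwa [Nat.mod_eq_of_lt (hu.1.2.2.1.trans_le (Nat.pow_le_pow_right hb0 hui.le))]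
    have := (hB.1.existsUnique_mod_pow hb0 hu.1.2.2.2).unique ⟨hi', hi'B⟩ ⟨by omega, hiB'⟩
    omega
  rw [Nat.mod_eq_of_lt (hlt.trans_le (Nat.pow_le_pow_right hb0 hui'))] at hi'B
  refine ⟨_, hi'B, fun ⟨w, hw, hwm⟩ => ?_⟩
  have hwu : w.1 ≤ u.1 := fst_le hw hu.1.1 (by
    rw [hwm, hmod u.1 le_rfl, hu.1.snd_mod_pow_fst]
    exact hu.2.1)
  have := hw.1.2.2.1
  have := Nat.pow_le_pow_right hb0 hwu
  simp only at hwm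
  omega

lemma subset_of_ncard_le (hb : 2 ≤ b) {B : Set (ℕ × ℕ)} (hB : IsPDBlocking b D B)
    (hcard : B.ncard ≤ (minimalMaskZeros b D).ncard) : minimalMaskZeros b D ⊆ B := by
  intro u hu
  by_contra huB
  obtain ⟨y, hyB, hy⟩ := exists_mem_snd_notMem_image hb hB hu huB
  have hsub : Prod.snd '' minimalMaskZeros b D ⊂ Prod.snd '' B := by
    refine (Set.ssubset_iff_of_subset ?_).mpr ⟨y.2, ⟨y, hyB, rfl⟩, hy⟩
    rintro _ ⟨w, hw, rfl⟩
    obtain ⟨i, -, hiB⟩ := exists_mem_of_isPDBlocking (by omega) hB hw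
    exact ⟨_, hiB, rfl⟩
  have := calc (minimalMaskZeros b D).ncard
      _ = (Prod.snd '' minimalMaskZeros b D).ncard := injOn_snd.ncard_image.symm
      _ < (Prod.snd '' B).ncard := Set.ncard_lt_ncard hsub (hB.1.1.image _)
      _ ≤ B.ncard := Set.ncard_image_le hB.1.1
  omega

end minimalMaskZeros

/-- A minimal-cardinality `P_D`-blocking is symmetric. -/
theorem stmt15 (b : ℕ) (hb : 2 ≤ b) (D : Finset ℕ) (B : Set (ℕ × ℕ))
    (hB : IsPDBlocking b D B)
    (hmin : ∀ B' : Set (ℕ × ℕ), IsPDBlocking b D B' → B.ncard ≤ B'.ncard) :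
    ∀ v ∈ B, ∀ w : ℕ × ℕ, IsVertex b w → tau b w = tau b v → w ∈ B := by
  have hb0 : 0 < b := by omega
  have hM := minimalMaskZeros.isPDBlocking hb0 hB
  have hMB : minimalMaskZeros b D = B :=
    hM.1.eq_of_subset hb0 hB.1 (minimalMaskZeros.subset_of_ncard_le hb hB (hmin _ hM))
  intro v hv w hw h
  rw [← hMB] at hv ⊢
  exact minimalMaskZeros.mem_of_tau_eq hb0 hv hw h
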